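/- Let $\Omega \subseteq \mathbb{R}^n$ have finite measure, let $1 \le p < q \le \infty$, and let $(f_j)$ be a sequence in $L^p(\Omega, \mathbb{R}^m)$ that is bounded in $L^p$. Then the family $(|f_j|^p)_j$ is uniformly integrable if and only if for each $\varepsilon > 0$ there exist a sequence $(g_j) \subseteq L^q(\Omega, \mathbb{R}^m)$ and a constant $c_\varepsilon > 0$ such that for all $j$, $\|f_j - g_j\|_{L^p} < \varepsilon$ and $\|g_j\|_{L^q} \le c_\varepsilon$. -/

import Mathlib

/-!
Truncating `f j` at height `t` gives functions bounded by `t`, hence uniformly bounded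
in `L^q` on a set of finite measure, and the `L^p` error of the truncation is exactly
the tail of `f j` beyond `t`. Conversely, by Chebyshev the sets `{t < ‖f j‖}` have
uniformly small measure for large `t`, and on a set `S` Hölder's inequality gives
`‖g‖_{L^p(S)} ≤ ‖g‖_{L^q} |S|^(1/p - 1/q)`, so the tail of `f j` is at most
`‖f j - g j‖_p` plus a uniformly small term.
-/

open MeasureTheory ENNReal Filter Topology

section

variable {ι α E : Type*} [NormedAddCommGroup E]

noncomputable def normTruncation (f : α → E) (t : ℝ) : α → E :=
  {x | ‖f x‖ ≤ t}.indicator f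

theorem sub_normTruncation (f : α → E) (t : ℝ) :
    f - normTruncation f t = {x | t < ‖f x‖}.indicator f := by
  ext x
  by_cases hx : ‖f x‖ ≤ t <;> simp [normTruncation, Set.indicator, hx, not_lt.2, lt_of_not_ge]

variable [MeasurableSpace α] {μ : Measure α}

theorem lintegral_ofReal_norm_rpow_eq_eLpNorm_rpow {p : ℝ} (hp : 0 < p) (f : α → E) :
    ∫⁻ x, ENNReal.ofReal (‖f x‖ ^ p) ∂μ = eLpNorm f (ENNReal.ofReal p) μ ^ p := by
  rw [eLpNorm_eq_lintegral_rpow_enorm_toReal (by simpa using hp) ofReal_ne_top,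
    toReal_ofReal hp.le, ← ENNReal.rpow_mul, one_div_mul_cancel hp.ne', ENNReal.rpow_one]
  refine lintegral_congr fun x => ?_
  rw [← ofReal_norm, ENNReal.ofReal_rpow_of_nonneg (norm_nonneg _) hp.le]

theorem MeasureTheory.AEStronglyMeasurable.nullMeasurableSet_lt_norm {f : α → E}
    (hf : AEStronglyMeasurable f μ) (t : ℝ) : NullMeasurableSet {x | t < ‖f x‖} μ :=
  nullMeasurableSet_lt aestronglyMeasurable_const hf.norm

theorem eLpNorm_sub_normTruncation_rpow {p : ℝ} (hp : 0 < p) {f : α → E}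
    (hf : AEStronglyMeasurable f μ) (t : ℝ) :
    eLpNorm (f - normTruncation f t) (ENNReal.ofReal p) μ ^ p =
      ∫⁻ x in {x | t < ‖f x‖}, ENNReal.ofReal (‖f x‖ ^ p) ∂μ := by
  rw [sub_normTruncation, ← lintegral_ofReal_norm_rpow_eq_eLpNorm_rpow hp,
    ← lintegral_indicator₀ (hf.nullMeasurableSet_lt_norm t)]
  refine lintegral_congr fun x => ?_
  by_cases hx : t < ‖f x‖ <;> simp [Set.indicator, hx, Real.zero_rpow hp.ne']

theorem eLpNorm_normTruncation_le (f : α → E) (t : ℝ) (q : ℝ≥0∞) :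
    eLpNorm (normTruncation f t) q μ ≤ ENNReal.ofReal t * μ Set.univ ^ q.toReal⁻¹ := by
  refine eLpNorm_le_of_ae_enorm_bound (Eventually.of_forall fun x => ?_)
  by_cases hx : ‖f x‖ ≤ t
  · simpa [normTruncation, Set.indicator, hx, ← ofReal_norm] using ENNReal.ofReal_le_ofReal hx
  · simp [normTruncation, Set.indicator, hx]

theorem memLp_normTruncation [IsFiniteMeasure μ] {f : α → E} (hf : AEStronglyMeasurable f μ)
    (t : ℝ) (q : ℝ≥0∞) : MemLp (normTruncation f t) q μ :=
  ⟨hf.indicator₀ (nullMeasurableSet_le hf.norm.aemeasurable aemeasurable_const),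
    (eLpNorm_normTruncation_le f t q).trans_lt
      (mul_lt_top ofReal_lt_top (rpow_lt_top_of_nonneg (by positivity) (measure_ne_top μ _)))⟩

theorem exists_bounded_approx_of_tail [IsFiniteMeasure μ] {p : ℝ} (hp : 0 < p) (q : ℝ≥0∞)
    {f : ι → α → E} (hf : ∀ j, AEStronglyMeasurable (f j) μ)
    (htail : ∀ ε > (0 : ℝ), ∃ t : ℝ, ∀ j,
      ∫⁻ x in {x | t < ‖f j x‖}, ENNReal.ofReal (‖f j x‖ ^ p) ∂μ ≤ ENNReal.ofReal ε)
    {ε : ℝ} (hε : 0 < ε) :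
    ∃ (g : ι → α → E) (c : ℝ≥0∞), 0 < c ∧ c < ⊤ ∧ ∀ j, MemLp (g j) q μ ∧
      eLpNorm (f j - g j) (ENNReal.ofReal p) μ < ENNReal.ofReal ε ∧ eLpNorm (g j) q μ ≤ c := by
  obtain ⟨t, ht⟩ := htail ((ε / 2) ^ p) (by positivity)
  have hc : ENNReal.ofReal t * μ Set.univ ^ q.toReal⁻¹ < ⊤ :=
    mul_lt_top ofReal_lt_top (rpow_lt_top_of_nonneg (by positivity) (measure_ne_top μ _))
  refine ⟨fun j => normTruncation (f j) t, ENNReal.ofReal t * μ Set.univ ^ q.toReal⁻¹ + 1,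
    by positivity, add_lt_top.2 ⟨hc, one_lt_top⟩, fun j => ⟨memLp_normTruncation (hf j) t q, ?_,
      (eLpNorm_normTruncation_le _ t q).trans le_self_add⟩⟩
  have herr : eLpNorm (f j - normTruncation (f j) t) (ENNReal.ofReal p) μ ^ p ≤
      ENNReal.ofReal (ε / 2) ^ p := by
    rw [eLpNorm_sub_normTruncation_rpow hp (hf j),
      ENNReal.ofReal_rpow_of_nonneg (by positivity) hp.le]
    exact ht j
  exact ((ENNReal.rpow_le_rpow_iff hp).1 herr).trans_lt
    (ofReal_lt_ofReal_iff'.2 ⟨by linarith, hε⟩)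

theorem sub_one_div_toReal_pos {p q : ℝ≥0∞} (hp : p ≠ 0) (hpq : p < q) :
    0 < 1 / p.toReal - 1 / q.toReal := by
  have hp_pos : 0 < p.toReal := toReal_pos hp hpq.ne_top
  rcases eq_or_ne q ⊤ with rfl | hq
  · simpa using hp_pos
  · have := one_div_lt_one_div_of_lt hp_pos ((toReal_lt_toReal hpq.ne_top hq).2 hpq)
    linarith

theorem eLpNorm_restrict_le_eLpNorm_sub_add {p q : ℝ≥0∞} (hp : 1 ≤ p) (hpq : p ≤ q)
    {f g : α → E} (hf : AEStronglyMeasurable f μ) (hg : AEStronglyMeasurable g μ) (s : Set α) :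
    eLpNorm f p (μ.restrict s) ≤
      eLpNorm (f - g) p μ + eLpNorm g q μ * μ s ^ (1 / p.toReal - 1 / q.toReal) := by
  have hholder := eLpNorm_le_eLpNorm_mul_rpow_measure_univ hpq (hg.restrict (s := s))
  rw [Measure.restrict_apply_univ] at hholder
  calc eLpNorm f p (μ.restrict s) = eLpNorm ((f - g) + g) p (μ.restrict s) := by
        rw [sub_add_cancel]
    _ ≤ eLpNorm (f - g) p (μ.restrict s) + eLpNorm g p (μ.restrict s) :=
        eLpNorm_add_le (hf.sub hg).restrict hg.restrict hp
    _ ≤ eLpNorm (f - g) p μ + eLpNorm g q μ * μ s ^ (1 / p.toReal - 1 / q.toReal) := by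
        refine add_le_add (eLpNorm_restrict_le (f - g) p μ s) (hholder.trans ?_)
        gcongr ?_ * _
        exact eLpNorm_restrict_le g q μ s

theorem exists_forall_measure_norm_gt_le {p : ℝ≥0∞} (hp0 : p ≠ 0) (hp : p ≠ ⊤)
    {f : ι → α → E} (hf : ∀ j, AEStronglyMeasurable (f j) μ) {C : ℝ≥0∞} (hC : C ≠ ⊤)
    (hfC : ∀ j, eLpNorm (f j) p μ ≤ C) {δ : ℝ≥0∞} (hδ : δ ≠ 0) :
    ∃ t : ℝ, ∀ j, μ {x | t < ‖f j x‖} ≤ δ := by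
  have hp_pos : 0 < p.toReal := toReal_pos hp0 hp
  have hlim :
      Tendsto (fun t : ℝ => (ENNReal.ofReal t)⁻¹ ^ p.toReal * C ^ p.toReal) atTop (𝓝 0) := by
    have hinv : Tendsto (fun t : ℝ => (ENNReal.ofReal t)⁻¹) atTop (𝓝 0) := by
      simpa using tendsto_ofReal_atTop.inv
    have h := ENNReal.Tendsto.mul_const
      ((ENNReal.continuous_rpow_const (y := p.toReal)).tendsto 0 |>.comp hinv)
      (b := C ^ p.toReal) (Or.inr (rpow_ne_top_of_nonneg hp_pos.le hC))
    simpa [ENNReal.zero_rpow_of_pos hp_pos] using h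
  obtain ⟨t, ht0, ht⟩ :=
    ((eventually_gt_atTop 0).and (hlim.eventually (Iio_mem_nhds (pos_iff_ne_zero.2 hδ)))).exists
  refine ⟨t, fun j => ?_⟩
  calc μ {x | t < ‖f j x‖} ≤ μ {x | ENNReal.ofReal t ≤ ‖f j x‖ₑ} :=
        measure_mono fun x hx => by
          simpa [← ofReal_norm] using ENNReal.ofReal_le_ofReal (le_of_lt hx)
    _ ≤ (ENNReal.ofReal t)⁻¹ ^ p.toReal * eLpNorm (f j) p μ ^ p.toReal :=
        meas_ge_le_mul_pow_eLpNorm_enorm μ hp0 hp (hf j) (by simpa using ht0) (by simp)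
    _ ≤ (ENNReal.ofReal t)⁻¹ ^ p.toReal * C ^ p.toReal := by gcongr; exact hfC j
    _ ≤ δ := ht.le

theorem tail_of_exists_bounded_approx {p : ℝ} (hp : 1 ≤ p) {q : ℝ≥0∞}
    (hpq : ENNReal.ofReal p < q) {f : ι → α → E} (hf : ∀ j, AEStronglyMeasurable (f j) μ)
    (hbdd : ∃ C : ℝ≥0∞, C < ⊤ ∧ ∀ j, eLpNorm (f j) (ENNReal.ofReal p) μ ≤ C)
    (happrox : ∀ ε > (0 : ℝ), ∃ (g : ι → α → E) (c : ℝ≥0∞), 0 < c ∧ c < ⊤ ∧ ∀ j,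
      MemLp (g j) q μ ∧ eLpNorm (f j - g j) (ENNReal.ofReal p) μ < ENNReal.ofReal ε ∧
        eLpNorm (g j) q μ ≤ c)
    {ε : ℝ} (hε : 0 < ε) :
    ∃ t : ℝ, ∀ j,
      ∫⁻ x in {x | t < ‖f j x‖}, ENNReal.ofReal (‖f j x‖ ^ p) ∂μ ≤ ENNReal.ofReal ε := by
  have hp0 : 0 < p := one_pos.trans_le hp
  have hP0 : ENNReal.ofReal p ≠ 0 := by simpa using hp0
  obtain ⟨C, hC, hfC⟩ := hbdd
  set δ := ε ^ p⁻¹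
  have hδ : 0 < δ := by positivity
  obtain ⟨g, c, hc0, hc, hg⟩ := happrox (δ / 2) (by positivity)
  set r := 1 / (ENNReal.ofReal p).toReal - 1 / q.toReal
  have hr : 0 < r := sub_one_div_toReal_pos hP0 hpq
  obtain ⟨t, ht⟩ := exists_forall_measure_norm_gt_le hP0 ofReal_ne_top hf hC.ne hfC
    (δ := (ENNReal.ofReal (δ / 2) / c) ^ r⁻¹) (by simp [hc.ne, hr.le, hδ])
  refine ⟨t, fun j => ?_⟩
  obtain ⟨hgq, hfg, hgc⟩ := hg j
  have hS : μ {x | t < ‖f j x‖} ^ r ≤ ENNReal.ofReal (δ / 2) / c := by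
    simpa [ENNReal.rpow_inv_rpow hr.ne'] using ENNReal.rpow_le_rpow (ht j) hr.le
  have hmain : eLpNorm (f j) (ENNReal.ofReal p) (μ.restrict {x | t < ‖f j x‖}) ≤
      ENNReal.ofReal δ :=
    calc _ ≤ eLpNorm (f j - g j) (ENNReal.ofReal p) μ +
            eLpNorm (g j) q μ * μ {x | t < ‖f j x‖} ^ r :=
          eLpNorm_restrict_le_eLpNorm_sub_add (by simpa using hp) hpq.le (hf j) hgq.1 _
      _ ≤ ENNReal.ofReal (δ / 2) + c * (ENNReal.ofReal (δ / 2) / c) := by gcongr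
      _ = ENNReal.ofReal δ := by
          rw [ENNReal.mul_div_cancel hc0.ne' hc.ne, ← ofReal_add (by positivity) (by positivity),
            add_halves]
  rw [lintegral_ofReal_norm_rpow_eq_eLpNorm_rpow hp0, ← Real.rpow_inv_rpow hε.le hp0.ne',
    ← ENNReal.ofReal_rpow_of_nonneg (by positivity) hp0.le]
  exact ENNReal.rpow_le_rpow hmain hp0.le

end

theorem stmt_13_general (n m : ℕ) (p : ℝ) (hp : 1 ≤ p) (q : ℝ≥0∞) (hpq : ENNReal.ofReal p < q)
    (Ω : Set (EuclideanSpace ℝ (Fin n))) (hΩfin : volume Ω < ⊤)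
    (f : ℕ → EuclideanSpace ℝ (Fin n) → EuclideanSpace ℝ (Fin m))
    (hf : ∀ j, MemLp (f j) (ENNReal.ofReal p) (volume.restrict Ω))
    (hbdd : ∃ C : ℝ≥0∞, C < ⊤ ∧ ∀ j,
      eLpNorm (f j) (ENNReal.ofReal p) (volume.restrict Ω) ≤ C) :
    (∀ ε > (0 : ℝ), ∃ t : ℝ, ∀ j,
        ∫⁻ x in Ω ∩ {x | t < ‖f j x‖}, ENNReal.ofReal (‖f j x‖ ^ p) ≤ ENNReal.ofReal ε)
      ↔ (∀ ε > (0 : ℝ),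
          ∃ (g : ℕ → EuclideanSpace ℝ (Fin n) → EuclideanSpace ℝ (Fin m)) (c : ℝ≥0∞),
            0 < c ∧ c < ⊤ ∧ ∀ j, MemLp (g j) q (volume.restrict Ω) ∧
              eLpNorm (f j - g j) (ENNReal.ofReal p) (volume.restrict Ω) <
                ENNReal.ofReal ε ∧
              eLpNorm (g j) q (volume.restrict Ω) ≤ c) := by
  have : IsFiniteMeasure (volume.restrict Ω) := isFiniteMeasure_restrict.2 hΩfin.ne
  have hfm : ∀ j, AEStronglyMeasurable (f j) (volume.restrict Ω) := fun j => (hf j).1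
  have hrestrict : ∀ j (t : ℝ),
      ∫⁻ x in Ω ∩ {x | t < ‖f j x‖}, ENNReal.ofReal (‖f j x‖ ^ p) =
        ∫⁻ x in {x | t < ‖f j x‖}, ENNReal.ofReal (‖f j x‖ ^ p) ∂volume.restrict Ω := by
    intro j t
    rw [Measure.restrict_restrict₀ ((hfm j).nullMeasurableSet_lt_norm t), Set.inter_comm]
  simp only [hrestrict]
  exact ⟨fun htail _ hε => exists_bounded_approx_of_tail (one_pos.trans_le hp) q hfm htail hε,
    fun happrox _ hε => tail_of_exists_bounded_approx hp hpq hfm hbdd happrox hε⟩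

theorem stmt_13 (n m : ℕ) (p : ℝ) (hp : 1 ≤ p) (q : ℝ≥0∞) (hpq : ENNReal.ofReal p < q)
    (Ω : Set (EuclideanSpace ℝ (Fin n))) (hΩ : MeasurableSet Ω) (hΩfin : volume Ω < ⊤)
    (f : ℕ → EuclideanSpace ℝ (Fin n) → EuclideanSpace ℝ (Fin m))
    (hf : ∀ j, MemLp (f j) (ENNReal.ofReal p) (volume.restrict Ω))
    (hbdd : ∃ C : ℝ≥0∞, C < ⊤ ∧ ∀ j,
      eLpNorm (f j) (ENNReal.ofReal p) (volume.restrict Ω) ≤ C) :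
    (∀ ε > (0 : ℝ), ∃ t : ℝ, ∀ j,
        ∫⁻ x in Ω ∩ {x | t < ‖f j x‖}, ENNReal.ofReal (‖f j x‖ ^ p) ≤ ENNReal.ofReal ε)
      ↔ (∀ ε > (0 : ℝ),
          ∃ (g : ℕ → EuclideanSpace ℝ (Fin n) → EuclideanSpace ℝ (Fin m)) (c : ℝ≥0∞),
            0 < c ∧ c < ⊤ ∧ ∀ j, MemLp (g j) q (volume.restrict Ω) ∧
              eLpNorm (f j - g j) (ENNReal.ofReal p) (volume.restrict Ω) <
                ENNReal.ofReal ε ∧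
              eLpNorm (g j) q (volume.restrict Ω) ≤ c) :=
  stmt_13_general n m p hp q hpq Ω hΩfin f hf hbdd
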